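/- arXiv:2209.03403 — 2 statements merged into one kernel-verified Lean document; each statement's English description precedes it below -/
import Mathlib

section
/- Let N ∈ ℕ, m a positive integer, and c₀, D > 0 with c₀DN^{-1/4} ≤ 1/2 and m ≤ 2N^{1/2}/D². If Q₁,…,Q_m are unit vectors in an inner product space satisfying |⟨Q_j,Q_k⟩| ≤ (cos(c₀DN^{-1/4}/2))^{2N} for all j ≠ k, then ‖Q₁+⋯+Q_m‖² ≥ m − (4N/D⁴)·exp(−c₀²D²N^{1/2}/24). -/
/-!
Expanding `‖∑ Q j‖²` gives `m` from the diagonal and at least `-m(m-1)ε` from the off-diagonal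
inner products, where `ε = cos(β)^(2N)` bounds the overlaps. For `0 ≤ β ≤ 1/4` one has
`cos β ≤ 1 - β²/3 ≤ exp(-β²/3)`, so `ε ≤ exp(-c₀²D²√N/6)`, while `m ≤ 2√N/D²` gives `m² ≤ 4N/D⁴`.
-/

open Finset Real

open scoped InnerProductSpace

theorem card_sub_mul_le_norm_sum_sq {𝕜 E ι : Type*} [RCLike 𝕜] [NormedAddCommGroup E]
    [InnerProductSpace 𝕜 E] [Fintype ι] (Q : ι → E) (hQ : ∀ i, ‖Q i‖ = 1) {ε : ℝ}
    (hε : ∀ i j, i ≠ j → ‖⟪Q i, Q j⟫_𝕜‖ ≤ ε) :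
    (Fintype.card ι : ℝ) - Fintype.card ι * (Fintype.card ι - 1) * ε ≤ ‖∑ i, Q i‖ ^ 2 := by
  classical
  have hoff : ∀ i, ∀ j ∈ univ.erase i, -ε ≤ RCLike.re ⟪Q i, Q j⟫_𝕜 := fun i j hj =>
    (neg_le_neg (hε i j (Ne.symm (ne_of_mem_erase hj)))).trans
      (neg_le_of_abs_le (RCLike.abs_re_le_norm _))
  have hcard : ∀ i : ι, (#(univ.erase i) : ℝ) = Fintype.card ι - 1 := fun i => by
    rw [eq_sub_iff_add_eq, ← Nat.cast_add_one, card_erase_add_one (mem_univ i), card_univ]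
  calc (Fintype.card ι : ℝ) - Fintype.card ι * (Fintype.card ι - 1) * ε
      = ∑ i, (‖Q i‖ ^ 2 + ∑ _j ∈ univ.erase i, -ε) := by
        simp only [hQ, one_pow, sum_const, nsmul_eq_mul, hcard, card_univ]
        ring
    _ ≤ ∑ i, (RCLike.re ⟪Q i, Q i⟫_𝕜 + ∑ j ∈ univ.erase i, RCLike.re ⟪Q i, Q j⟫_𝕜) := by
        gcongr with i _ j hj
        · exact (inner_self_eq_norm_sq _).ge
        · exact hoff i j hj
    _ = ‖∑ i, Q i‖ ^ 2 := by
        rw [← inner_self_eq_norm_sq (𝕜 := 𝕜), sum_inner, map_sum]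
        refine sum_congr rfl fun i _ => ?_
        rw [inner_sum, map_sum]
        exact add_sum_erase univ (fun j => RCLike.re ⟪Q i, Q j⟫_𝕜) (mem_univ i)

theorem Real.cos_le_one_sub_sq_div_three {x : ℝ} (hx : |x| ≤ 1) : cos x ≤ 1 - x ^ 2 / 3 := by
  have hx2 : x ^ 2 ≤ 1 := by rw [← sq_abs]; exact pow_le_one₀ (abs_nonneg x) hx
  have hx4 : |x| ^ 4 = (x ^ 2) ^ 2 := by rw [← sq_abs x, ← pow_mul]
  nlinarith [(abs_le.1 (cos_bound hx)).2]

theorem Real.cos_pow_le_exp {x : ℝ} (hx : |x| ≤ 1) (n : ℕ) :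
    cos x ^ n ≤ exp (-(n * x ^ 2 / 3)) := by
  have hcos := (cos_pos_of_le_one hx).le
  calc cos x ^ n ≤ exp (-(x ^ 2 / 3)) ^ n := by
        gcongr
        linarith [cos_le_one_sub_sq_div_three hx, add_one_le_exp (-(x ^ 2 / 3))]
    _ = exp (-(n * x ^ 2 / 3)) := by rw [← exp_nat_mul]; ring_nf

theorem Real.mul_rpow_neg_one_div_four_sq {x : ℝ} (hx : 0 ≤ x) :
    x * (x ^ (-(1 / 4 : ℝ))) ^ 2 = √x := by
  rcases hx.eq_or_lt with rfl | hx
  · simp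
  rw [← rpow_natCast, ← rpow_mul hx.le, ← rpow_one_add' hx.le (by norm_num), sqrt_eq_rpow]
  norm_num

theorem sq_le_of_le_two_mul_sqrt_div_sq {a b d : ℝ} (ha : 0 ≤ a) (hb : 0 ≤ b)
    (h : a ≤ 2 * √b / d ^ 2) : a ^ 2 ≤ 4 * b / d ^ 4 := by
  calc a ^ 2 ≤ (2 * √b / d ^ 2) ^ 2 := by gcongr
    _ = 4 * b / d ^ 4 := by rw [div_pow, mul_pow, sq_sqrt hb]; ring

theorem almost_orthogonal_lower_bound_general
    {E : Type*} [NormedAddCommGroup E] [InnerProductSpace ℂ E]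
    (N m : ℕ) (c₀ D : ℝ) (hc₀ : 0 < c₀) (hD : 0 < D)
    (hsmall : c₀ * D * (N : ℝ) ^ (-(1/4 : ℝ)) ≤ 1/2)
    (hmle : (m : ℝ) ≤ 2 * Real.sqrt N / D^2)
    (Q : Fin m → E) (hunit : ∀ j, ‖Q j‖ = 1)
    (hovlp : ∀ j k, j ≠ k →
      ‖(inner ℂ (Q j) (Q k) : ℂ)‖ ≤ (Real.cos (c₀ * D * (N : ℝ) ^ (-(1/4 : ℝ)) / 2))^(2*N)) :
    (m : ℝ) - (4 * (N : ℝ) / D^4) * Real.exp (-(c₀^2 * D^2 * Real.sqrt N) / 24)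
      ≤ ‖∑ j, Q j‖^2 := by
  set β := c₀ * D * (N : ℝ) ^ (-(1/4 : ℝ)) / 2
  have hβ : |β| ≤ 1 := by rw [abs_of_nonneg (by positivity)]; unfold β; linarith
  have hε₀ : 0 ≤ cos β ^ (2 * N) := pow_nonneg (cos_pos_of_le_one hβ).le _
  have hε : cos β ^ (2 * N) ≤ exp (-(c₀^2 * D^2 * √N) / 24) :=
    calc cos β ^ (2 * N) ≤ exp (-((2 * N : ℕ) * β ^ 2 / 3)) := cos_pow_le_exp hβ _
      _ = exp (-(c₀^2 * D^2 * √N / 6)) := by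
        rw [← mul_rpow_neg_one_div_four_sq N.cast_nonneg]; unfold β; push_cast; ring_nf
      _ ≤ exp (-(c₀^2 * D^2 * √N) / 24) := by
        have : 0 ≤ c₀^2 * D^2 * √N := by positivity
        gcongr; linarith
  have hm := sq_le_of_le_two_mul_sqrt_div_sq m.cast_nonneg N.cast_nonneg hmle
  calc (m : ℝ) - 4 * N / D ^ 4 * exp (-(c₀^2 * D^2 * √N) / 24)
      ≤ m - m * (m - 1) * cos β ^ (2 * N) := by
        nlinarith [mul_le_mul hm hε hε₀ (by positivity)]
    _ ≤ ‖∑ j, Q j‖ ^ 2 := by simpa using card_sub_mul_le_norm_sum_sq Q hunit hovlp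

theorem almost_orthogonal_lower_bound
    {E : Type*} [NormedAddCommGroup E] [InnerProductSpace ℂ E]
    (N m : ℕ) (hm : 1 ≤ m) (c₀ D : ℝ) (hc₀ : 0 < c₀) (hD : 0 < D)
    (hsmall : c₀ * D * (N : ℝ) ^ (-(1/4 : ℝ)) ≤ 1/2)
    (hmle : (m : ℝ) ≤ 2 * Real.sqrt N / D^2)
    (Q : Fin m → E) (hunit : ∀ j, ‖Q j‖ = 1)
    (hovlp : ∀ j k, j ≠ k →
      ‖(inner ℂ (Q j) (Q k) : ℂ)‖ ≤ (Real.cos (c₀ * D * (N : ℝ) ^ (-(1/4 : ℝ)) / 2))^(2*N)) :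
    (m : ℝ) - (4 * (N : ℝ) / D^4) * Real.exp (-(c₀^2 * D^2 * Real.sqrt N) / 24)
      ≤ ‖∑ j, Q j‖^2 :=
  almost_orthogonal_lower_bound_general N m c₀ D hc₀ hD hsmall hmle Q hunit hovlp
end

section
/- Let W, C > 0, and for each N let m = m(N) be the nearest even integer to N^{1/2}/D² for a parameter D > 0. Suppose α₁,…,α_m ∈ [0, π/2] satisfy: (a) #{j : α_j ≤ 1/m} ≤ C; (b) each interval (l/m, (l+1)/m], l ≥ 1, contains at most W of the α_j. Then there exist D₀ > 0 and N₀ such that for all D ≥ D₀ and N ≥ N₀, ∑_{j=1}^m (cos α_j)^N ≤ C + 1 + W. -/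
set_option maxHeartbeats 1000000


open Finset Real

/-- Abstract form of the `L^∞` estimate for a sum of Gaussian beams: if `m` is (within 1 of)
`N^{1/2}/D²`, at most `C` of the angles `α_j ∈ [0,π/2]` satisfy `α_j ≤ 1/m` (no clustering
around great circles), and each strip `(l/m,(l+1)/m]`, `l ≥ 1`, contains at most `W` of the
`α_j` (well-separation), then for `D` and `N` large, `∑_j (cos α_j)^N ≤ C + 1 + W`. -/
theorem abstract_Linfty_estimate (W C : ℝ) (hW : 0 < W) (hC : 0 < C) :
    ∃ D₀ : ℝ, 0 < D₀ ∧ ∃ N₀ : ℕ,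
      ∀ D : ℝ, D₀ ≤ D → ∀ N : ℕ, N₀ ≤ N → ∀ m : ℕ, 1 ≤ m →
        |(m : ℝ) - Real.sqrt N / D^2| ≤ 1 →
        ∀ α : Fin m → ℝ, (∀ j, 0 ≤ α j ∧ α j ≤ π / 2) →
          ((Finset.univ.filter (fun j => α j ≤ 1 / (m : ℝ))).card : ℝ) ≤ C →
          (∀ l : ℕ, 1 ≤ l →
            ((Finset.univ.filter
                (fun j => (l : ℝ) / m < α j ∧ α j ≤ ((l : ℝ) + 1) / m)).card : ℝ) ≤ W) →
          ∑ j, Real.cos (α j) ^ N ≤ C + 1 + W := by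
  refine ⟨2, by norm_num, 1024, ?_⟩
  intro D hD N hN m hm hmN α hα hC0 hWl
  have hm1 : (1 : ℝ) ≤ (m : ℝ) := by exact_mod_cast hm
  have hm0 : (0 : ℝ) < (m : ℝ) := by linarith
  -- bound on m : m ≤ 9 √N / 32, hence π² m² ≤ N
  have hsqrtN : (32 : ℝ) ≤ Real.sqrt N := by
    have : (32 : ℝ) = Real.sqrt 1024 := by
      rw [show (1024 : ℝ) = 32 ^ 2 by norm_num, Real.sqrt_sq]; norm_num
    rw [this]
    exact Real.sqrt_le_sqrt (by exact_mod_cast hN)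
  have hD2 : (4 : ℝ) ≤ D ^ 2 := by nlinarith
  have hmle : (m : ℝ) ≤ 9 * Real.sqrt N / 32 := by
    have h1 : (m : ℝ) ≤ Real.sqrt N / D ^ 2 + 1 := by
      have := abs_le.1 hmN
      linarith [this.2]
    have h2 : Real.sqrt N / D ^ 2 ≤ Real.sqrt N / 4 := by
      apply div_le_div_of_nonneg_left (Real.sqrt_nonneg _) (by norm_num) hD2
    have h3 : (1 : ℝ) ≤ Real.sqrt N / 32 := by linarith
    linarith
  have hNm : π ^ 2 * (m : ℝ) ^ 2 ≤ N := by
    have hsq : Real.sqrt N ^ 2 = (N : ℝ) := Real.sq_sqrt (Nat.cast_nonneg N)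
    have hpi : π ^ 2 ≤ 10 := by nlinarith [Real.pi_lt_d2, Real.pi_pos]
    have hm2 : (m : ℝ) ^ 2 ≤ 81 * N / 1024 := by nlinarith [Real.sqrt_nonneg (N : ℝ)]
    nlinarith [sq_nonneg (m : ℝ)]
  -- the exponent rate
  set a : ℝ := 2 / π ^ 2 * (N / (m : ℝ) ^ 2) with ha_def
  have hpi0 : (0 : ℝ) < π := Real.pi_pos
  have ha2 : (2 : ℝ) ≤ a := by
    rw [ha_def]
    rw [div_mul_div_comm, le_div_iff₀ (by positivity)]
    nlinarith
  have hr : Real.exp (-a) ≤ 1 / 2 := by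
    have : Real.exp (-a) ≤ Real.exp (-2) := Real.exp_le_exp.2 (by linarith)
    have h2 : Real.exp (-2) ≤ 1 / 2 := by
      rw [Real.exp_neg]
      have h3 : (2:ℝ) ≤ Real.exp 2 := by linarith [Real.add_one_le_exp (2:ℝ)]
      rw [div_eq_inv_mul, mul_one]
      exact inv_anti₀ (by norm_num) h3
    linarith
  -- key pointwise bound on a strip
  have key : ∀ l : ℕ, 1 ≤ l → ∀ j : Fin m,
      (l : ℝ) / m < α j → α j ≤ ((l : ℝ) + 1) / m →
      Real.cos (α j) ^ N ≤ (1 / 2) ^ l := by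
    intro l hl j h1 h2
    obtain ⟨hα0, hαpi⟩ := hα j
    have hl1 : (1 : ℝ) ≤ (l : ℝ) := by exact_mod_cast hl
    have hlm0 : (0 : ℝ) ≤ (l : ℝ) / m := by positivity
    have hcos1 : Real.cos (α j) ≤ Real.cos ((l : ℝ) / m) :=
      Real.cos_le_cos_of_nonneg_of_le_pi hlm0 (by linarith [Real.pi_pos]) h1.le
    have hcos2 : Real.cos ((l : ℝ) / m) ≤ 1 - 2 / π ^ 2 * ((l : ℝ) / m) ^ 2 := by
      apply Real.cos_le_one_sub_mul_cos_sq
      rw [abs_of_nonneg hlm0]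
      calc (l : ℝ) / m ≤ α j := h1.le
        _ ≤ π / 2 := hαpi
        _ ≤ π := by linarith
    have hcosn : (0 : ℝ) ≤ Real.cos (α j) :=
      Real.cos_nonneg_of_mem_Icc ⟨by linarith, hαpi⟩
    have hexp : 1 - 2 / π ^ 2 * ((l : ℝ) / m) ^ 2 ≤ Real.exp (-(2 / π ^ 2 * ((l : ℝ) / m) ^ 2)) := by
      linarith [Real.add_one_le_exp (-(2 / π ^ 2 * ((l : ℝ) / m) ^ 2))]
    have step1 : Real.cos (α j) ^ N ≤ Real.exp (-(2 / π ^ 2 * ((l : ℝ) / m) ^ 2)) ^ N :=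
      pow_le_pow_left₀ hcosn (le_trans hcos1 (le_trans hcos2 hexp)) N
    have step2 : Real.exp (-(2 / π ^ 2 * ((l : ℝ) / m) ^ 2)) ^ N
        = Real.exp (-(2 / π ^ 2 * ((l : ℝ) / m) ^ 2) * N) := by
      rw [← Real.exp_nat_mul]; ring_nf
    have step3 : -(2 / π ^ 2 * ((l : ℝ) / m) ^ 2) * N ≤ (-a) * l := by
      rw [ha_def]
      have hll : (l : ℝ) ≤ (l : ℝ) ^ 2 := by nlinarith
      have hN0 : (0 : ℝ) ≤ (N : ℝ) := Nat.cast_nonneg N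
      have heq : 2 / π ^ 2 * ((N:ℝ) / (m : ℝ) ^ 2) * ((l:ℝ)^2)
          = 2 / π ^ 2 * ((l : ℝ) / m) ^ 2 * N := by ring
      have : 2 / π ^ 2 * ((N:ℝ) / (m : ℝ) ^ 2) * l ≤ 2 / π ^ 2 * ((l : ℝ) / m) ^ 2 * N := by
        rw [← heq]
        exact mul_le_mul_of_nonneg_left hll (by positivity)
      linarith
    calc Real.cos (α j) ^ N ≤ Real.exp (-(2 / π ^ 2 * ((l : ℝ) / m) ^ 2) * N) := by
          rw [← step2]; exact step1
      _ ≤ Real.exp ((-a) * l) := Real.exp_le_exp.2 step3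
      _ = Real.exp (-a) ^ l := by rw [← Real.exp_nat_mul]; ring_nf
      _ ≤ (1 / 2) ^ l := pow_le_pow_left₀ (Real.exp_nonneg _) hr l
  -- split the sum
  set S₀ : Finset (Fin m) := Finset.univ.filter (fun j => α j ≤ 1 / (m : ℝ)) with hS₀
  set T : ℕ → Finset (Fin m) := fun l =>
    Finset.univ.filter (fun j => (l : ℝ) / m < α j ∧ α j ≤ ((l : ℝ) + 1) / m) with hT
  set L : ℕ := ⌈(m : ℝ) * π / 2⌉₊ with hL
  have hcov : S₀ᶜ ⊆ (Finset.Icc 1 L).biUnion T := by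
    intro j hj
    simp only [hS₀, Finset.mem_compl, Finset.mem_filter, Finset.mem_univ, true_and,
      not_le] at hj
    obtain ⟨hα0, hαpi⟩ := hα j
    have hy1 : (1 : ℝ) < (m : ℝ) * α j := by
      rw [div_lt_iff₀ hm0] at hj; linarith [hj]
    set l : ℕ := ⌈(m : ℝ) * α j⌉₊ - 1 with hl
    have hceil2 : 2 ≤ ⌈(m : ℝ) * α j⌉₊ := by
      have h : 1 < ⌈(m : ℝ) * α j⌉₊ := Nat.lt_ceil.2 (by exact_mod_cast hy1)
      omega
    have hl1 : 1 ≤ l := by omega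
    have hlsucc : (l : ℕ) + 1 = ⌈(m : ℝ) * α j⌉₊ := by omega
    refine Finset.mem_biUnion.2 ⟨l, ?_, ?_⟩
    · refine Finset.mem_Icc.2 ⟨hl1, ?_⟩
      have : ⌈(m : ℝ) * α j⌉₊ ≤ L := by
        apply Nat.ceil_le_ceil
        have : α j ≤ π / 2 := hαpi
        calc (m : ℝ) * α j ≤ (m : ℝ) * (π / 2) := by nlinarith
          _ = (m : ℝ) * π / 2 := by ring
      omega
    · simp only [hT, Finset.mem_filter, Finset.mem_univ, true_and]
      constructor
      · rw [div_lt_iff₀ hm0]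
        have h1 : ((l : ℝ)) < (m : ℝ) * α j := by
          have := Nat.ceil_lt_add_one (le_of_lt (lt_trans one_pos hy1))
          have hcast : ((l : ℝ)) = (⌈(m : ℝ) * α j⌉₊ : ℝ) - 1 := by
            rw [hl]
            push_cast [Nat.cast_sub (by omega : 1 ≤ ⌈(m : ℝ) * α j⌉₊)]
            ring
          rw [hcast]; linarith
        linarith [h1]
      · rw [le_div_iff₀ hm0]
        have : (m : ℝ) * α j ≤ ((l : ℝ) + 1) := by
          have := Nat.le_ceil ((m : ℝ) * α j)
          have hcast : ((l : ℝ) + 1) = (⌈(m : ℝ) * α j⌉₊ : ℝ) := by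
            exact_mod_cast congrArg (Nat.cast : ℕ → ℝ) hlsucc
          rw [hcast]; exact this
        linarith [this]
  have hdisj : ∀ l₁ ∈ Finset.Icc 1 L, ∀ l₂ ∈ Finset.Icc 1 L, l₁ ≠ l₂ →
      Disjoint (T l₁) (T l₂) := by
    intro l₁ hmem₁ l₂ hmem₂ hne
    wlog hlt : l₁ < l₂ generalizing l₁ l₂
    · exact (this l₂ hmem₂ l₁ hmem₁ hne.symm (by omega)).symm
    rw [Finset.disjoint_left]
    intro j hj1 hj2
    simp only [hT, Finset.mem_filter, Finset.mem_univ, true_and] at hj1 hj2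
    have h12 : (l₁ : ℝ) + 1 ≤ (l₂ : ℝ) := by exact_mod_cast hlt
    have h1 := hj1.2
    have h2 := hj2.1
    have h3 : ((l₁ : ℝ) + 1) / m ≤ (l₂ : ℝ) / m := by gcongr
    linarith
  -- assemble
  have hsplit : ∑ j, Real.cos (α j) ^ N
      = ∑ j ∈ S₀, Real.cos (α j) ^ N + ∑ j ∈ S₀ᶜ, Real.cos (α j) ^ N :=
    (Finset.sum_add_sum_compl S₀ _).symm
  have hb1 : ∑ j ∈ S₀, Real.cos (α j) ^ N ≤ C := by
    calc ∑ j ∈ S₀, Real.cos (α j) ^ N ≤ ∑ _j ∈ S₀, (1:ℝ) := by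
          apply Finset.sum_le_sum
          intro j _
          obtain ⟨hα0, hαpi⟩ := hα j
          exact pow_le_one₀ (Real.cos_nonneg_of_mem_Icc ⟨by linarith [Real.pi_pos], hαpi⟩)
            (Real.cos_le_one _)
      _ = (S₀.card : ℝ) := by simp
      _ ≤ C := hC0
  have hgeo : ∑ l ∈ Finset.Icc 1 L, ((1:ℝ)/2) ^ l ≤ 1 := by
    have hrange : Finset.range (L+1) = insert 0 (Finset.Icc 1 L) := by
      ext x
      simp only [Finset.mem_range, Finset.mem_insert, Finset.mem_Icc]
      omega
    have h2 := sum_geometric_two_le (L+1)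
    rw [hrange, Finset.sum_insert (by simp)] at h2
    norm_num at h2
    linarith
  have hb2 : ∑ j ∈ S₀ᶜ, Real.cos (α j) ^ N ≤ W := by
    have hnn : ∀ j : Fin m, (0:ℝ) ≤ Real.cos (α j) ^ N := by
      intro j
      obtain ⟨hα0, hαpi⟩ := hα j
      exact pow_nonneg (Real.cos_nonneg_of_mem_Icc ⟨by linarith [Real.pi_pos], hαpi⟩) N
    calc ∑ j ∈ S₀ᶜ, Real.cos (α j) ^ N
        ≤ ∑ j ∈ (Finset.Icc 1 L).biUnion T, Real.cos (α j) ^ N :=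
          Finset.sum_le_sum_of_subset_of_nonneg hcov (fun j _ _ => hnn j)
      _ = ∑ l ∈ Finset.Icc 1 L, ∑ j ∈ T l, Real.cos (α j) ^ N :=
          Finset.sum_biUnion hdisj
      _ ≤ ∑ l ∈ Finset.Icc 1 L, W * ((1:ℝ)/2) ^ l := by
          apply Finset.sum_le_sum
          intro l hl
          obtain ⟨hl1, _⟩ := Finset.mem_Icc.1 hl
          calc ∑ j ∈ T l, Real.cos (α j) ^ N ≤ ∑ _j ∈ T l, ((1:ℝ)/2) ^ l := by
                apply Finset.sum_le_sum
                intro j hj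
                simp only [hT, Finset.mem_filter, Finset.mem_univ, true_and] at hj
                exact key l hl1 j hj.1 hj.2
            _ = ((T l).card : ℝ) * ((1:ℝ)/2) ^ l := by
                rw [Finset.sum_const, nsmul_eq_mul]
            _ ≤ W * ((1:ℝ)/2) ^ l := by
                apply mul_le_mul_of_nonneg_right (hWl l hl1) (by positivity)
      _ = W * ∑ l ∈ Finset.Icc 1 L, ((1:ℝ)/2) ^ l := by rw [Finset.mul_sum]
      _ ≤ W * 1 := mul_le_mul_of_nonneg_left hgeo hW.le
      _ = W := mul_one W
  rw [hsplit]
  linarith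
end
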